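/- Let φ be a Bernstein function and define the Bernstein-gamma function W_φ(z) = (e^{-γ_φ z}/φ(z)) · ∏_{k=1}^∞ (φ(k)/φ(k+z)) e^{(φ'(k)/φ(k)) z}, where γ_φ = lim_{n→∞} (Σ_{k=1}^n φ'(k)/φ(k) − log φ(n)). Then the constant γ_φ exists and satisfies −log φ(1) ≤ γ_φ ≤ φ'(1)/φ(1) − log φ(1). -/

import Mathlib

open MeasureTheory Filter Set

/-- A Bernstein function, given by its representing triplet `(κ, δ, μ)`:
`φ(u) = κ + δ·u + ∫₀^∞ (1 - e^{-u y}) μ(dy)`, with `κ, δ ≥ 0`,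
`μ` a nonnegative measure on `(0,∞)` with `∫ min(1,y) μ(dy) < ∞`, and `φ ≢ 0`. -/
structure BernsteinFn where
  κ : ℝ
  δ : ℝ
  μ : Measure ℝ
  hκ : 0 ≤ κ
  hδ : 0 ≤ δ
  hsupp : μ (Set.Iic 0) = 0
  hint : Integrable (fun y : ℝ => min 1 y) μ
  nontriv : ¬ (κ = 0 ∧ δ = 0 ∧ μ = 0)

/-- The Bernstein function as a real function on `(0,∞)`. -/
noncomputable def BernsteinFn.toFun (φ : BernsteinFn) (u : ℝ) : ℝ :=
  φ.κ + φ.δ * u + ∫ y, (1 - Real.exp (-(u * y))) ∂φ.μ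

/-- The holomorphic extension of the Bernstein function to the right half-plane. -/
noncomputable def BernsteinFn.toFunC (φ : BernsteinFn) (z : ℂ) : ℂ :=
  (φ.κ : ℂ) + (φ.δ : ℂ) * z + ∫ y, (1 - Complex.exp (-(z * (y : ℂ)))) ∂φ.μ

/-- The derivative of the Bernstein function: `φ'(u) = δ + ∫₀^∞ y e^{-u y} μ(dy)`. -/
noncomputable def BernsteinFn.deriv1 (φ : BernsteinFn) (u : ℝ) : ℝ :=
  φ.δ + ∫ y, y * Real.exp (-(u * y)) ∂φ.μ

/-!
Let `f n = log φ(n)` and `g k = φ'(k)/φ(k)`. Pointwise in `y`, `1 - e^{-uy}` is concave in `u`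
with derivative `y e^{-uy}`, so integrating gives the tangent-line bound
`φ(v) ≤ φ(u) + φ'(u)(v - u)`. Taking `(u, v) = (k, k+1)` and `(k+1, k)` and combining with
`1 - a/b ≤ log b - log a ≤ b/a - 1` yields `g (k+1) ≤ f (k+1) - f k ≤ g k`. Hence
`Σ_{k ≤ n} g k - f n` is non-increasing from `n = 1` on, where it equals `g 1 - f 1`, and it
stays above `-f 1` because the partial sums dominate the telescoping sum of the increments of `f`.
-/

open Topology

theorem exists_tendsto_sum_Icc_sub_mem_Icc {g f : ℕ → ℝ} (hg : ∀ k, 1 ≤ k → 0 ≤ g k)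
    (hle : ∀ k, 1 ≤ k → f (k + 1) - f k ≤ g k)
    (hge : ∀ k, 1 ≤ k → g (k + 1) ≤ f (k + 1) - f k) :
    ∃ γ, Tendsto (fun n => (∑ k ∈ Finset.Icc 1 n, g k) - f n) atTop (𝓝 γ) ∧
      γ ∈ Icc (-f 1) (g 1 - f 1) := by
  set a : ℕ → ℝ := fun n => (∑ k ∈ Finset.Icc 1 n, g k) - f n
  have sum_ge : ∀ n, f (n + 1) - f 1 ≤ ∑ k ∈ Finset.Icc 1 n, g k := by
    intro n
    induction n with
    | zero => simp
    | succ n ih =>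
      rw [Finset.sum_Icc_succ_top (by omega)]
      linarith [hle (n + 1) (by omega)]
  have lower : ∀ n, -f 1 ≤ a (n + 1) := fun n => by
    linarith [sum_ge (n + 1), hge (n + 1) (by omega), hg (n + 2) (by omega)]
  have anti : Antitone fun n => a (n + 1) := antitone_nat_of_succ_le fun n => by
    simp only [a]
    rw [Finset.sum_Icc_succ_top (by omega : 1 ≤ n + 1 + 1)]
    linarith [hge (n + 1) (by omega)]
  have bdd : BddBelow (range fun n => a (n + 1)) := ⟨-f 1, by rintro _ ⟨n, rfl⟩; exact lower n⟩
  refine ⟨⨅ n, a (n + 1), (tendsto_add_atTop_iff_nat 1).mp (tendsto_atTop_ciInf anti bdd),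
    le_ciInf lower, ?_⟩
  calc ⨅ n, a (n + 1) ≤ a 1 := ciInf_le bdd 0
    _ = g 1 - f 1 := by simp [a]

theorem Real.log_sub_log_le_div {a b : ℝ} (ha : 0 < a) (hb : 0 < b) :
    Real.log b - Real.log a ≤ (b - a) / a := by
  rw [← Real.log_div hb.ne' ha.ne', sub_div, div_self ha.ne']
  exact Real.log_le_sub_one_of_pos (div_pos hb ha)

theorem Real.div_le_log_sub_log {a b : ℝ} (ha : 0 < a) (hb : 0 < b) :
    (b - a) / b ≤ Real.log b - Real.log a := by
  rw [← Real.log_div hb.ne' ha.ne', sub_div, div_self hb.ne', ← inv_div]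
  exact Real.one_sub_inv_le_log_of_pos (div_pos hb ha)

theorem MeasureTheory.integral_pos_of_ae_pos {α : Type*} [MeasurableSpace α] {μ : Measure α}
    {f : α → ℝ} (hμ : μ ≠ 0) (hf : ∀ᵐ x ∂μ, 0 < f x) (hfi : Integrable f μ) :
    0 < ∫ x, f x ∂μ := by
  have nonneg : 0 ≤ᵐ[μ] f := by filter_upwards [hf] with x hx using hx.le
  refine (integral_nonneg_of_ae nonneg).lt_of_ne fun h => hμ ?_
  have ae_zero := (integral_eq_zero_iff_of_nonneg_ae nonneg hfi).mp h.symm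
  refine ae_eq_bot.mp (eventually_false_iff_eq_bot.mp ?_)
  filter_upwards [hf, ae_zero] with x hpos hzero
  exact hpos.ne' hzero

namespace BernsteinFn

variable (φ : BernsteinFn)

theorem ae_pos : ∀ᵐ y ∂φ.μ, 0 < y := by
  rw [ae_iff]
  convert φ.hsupp using 2
  ext y
  simp [not_lt]

theorem integrable_one_sub_exp {u : ℝ} (hu : 0 ≤ u) :
    Integrable (fun y : ℝ => 1 - Real.exp (-(u * y))) φ.μ := by
  refine Integrable.mono' (φ.hint.const_mul (max 1 u)) (by fun_prop) ?_
  filter_upwards [φ.ae_pos] with y hy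
  have exp_le_one : Real.exp (-(u * y)) ≤ 1 := Real.exp_le_one_iff.mpr (by nlinarith)
  have one_sub_le : 1 - u * y ≤ Real.exp (-(u * y)) := by
    linarith [Real.add_one_le_exp (-(u * y))]
  rw [Real.norm_eq_abs, abs_of_nonneg (by linarith)]
  rcases le_total y 1 with h | h
  · rw [min_eq_right h]
    nlinarith [le_max_right 1 u]
  · rw [min_eq_left h, mul_one]
    linarith [le_max_left 1 u, Real.exp_pos (-(u * y))]

theorem integrable_mul_exp {u : ℝ} (hu : 0 < u) :
    Integrable (fun y : ℝ => y * Real.exp (-(u * y))) φ.μ := by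
  refine Integrable.mono' (φ.hint.const_mul (max 1 u⁻¹)) (by fun_prop) ?_
  filter_upwards [φ.ae_pos] with y hy
  have exp_pos := Real.exp_pos (-(u * y))
  rw [Real.norm_eq_abs, abs_of_nonneg (by positivity)]
  rcases le_total y 1 with h | h
  · rw [min_eq_right h]
    have : Real.exp (-(u * y)) ≤ 1 := Real.exp_le_one_iff.mpr (by nlinarith)
    nlinarith [le_max_left 1 u⁻¹]
  · rw [min_eq_left h, mul_one]
    have : u * y * Real.exp (-(u * y)) ≤ 1 := by
      have := Real.add_one_le_exp (u * y)
      rw [Real.exp_neg, mul_inv_le_iff₀ (Real.exp_pos _)]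
      linarith
    calc y * Real.exp (-(u * y)) = u⁻¹ * (u * y * Real.exp (-(u * y))) := by field_simp
      _ ≤ u⁻¹ := mul_le_of_le_one_right (inv_pos.mpr hu).le this
      _ ≤ max 1 u⁻¹ := le_max_right _ _

theorem toFun_pos {u : ℝ} (hu : 0 < u) : 0 < φ.toFun u := by
  have integrand_pos : ∀ᵐ y ∂φ.μ, 0 < 1 - Real.exp (-(u * y)) := by
    filter_upwards [φ.ae_pos] with y hy
    linarith [Real.exp_lt_one_iff.mpr (show -(u * y) < 0 by nlinarith)]
  have linear_nonneg : 0 ≤ φ.κ + φ.δ * u := add_nonneg φ.hκ (mul_nonneg φ.hδ hu.le)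
  unfold toFun
  by_cases hμ : φ.μ = 0
  · rw [hμ, integral_zero_measure, add_zero]
    rcases φ.hκ.lt_or_eq with hκ | hκ
    · nlinarith [mul_nonneg φ.hδ hu.le]
    rcases φ.hδ.lt_or_eq with hδ | hδ
    · nlinarith
    exact absurd ⟨hκ.symm, hδ.symm, hμ⟩ φ.nontriv
  · linarith [integral_pos_of_ae_pos hμ integrand_pos (φ.integrable_one_sub_exp hu.le)]

theorem deriv1_nonneg (u : ℝ) : 0 ≤ φ.deriv1 u := by
  refine add_nonneg φ.hδ (integral_nonneg_of_ae ?_)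
  filter_upwards [φ.ae_pos] with y hy using by positivity

theorem toFun_le_add_deriv1_mul {u v : ℝ} (hu : 0 < u) (hv : 0 ≤ v) :
    φ.toFun v ≤ φ.toFun u + φ.deriv1 u * (v - u) := by
  have int_u := φ.integrable_one_sub_exp hu.le
  have int_deriv := (φ.integrable_mul_exp hu).mul_const (v - u)
  have pointwise : ∫ y, (1 - Real.exp (-(v * y))) ∂φ.μ ≤
      ∫ y, ((1 - Real.exp (-(u * y))) + y * Real.exp (-(u * y)) * (v - u)) ∂φ.μ := by
    refine integral_mono_ae (φ.integrable_one_sub_exp hv) (int_u.add int_deriv) ?_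
    filter_upwards with y
    have split : Real.exp (-(v * y)) = Real.exp (-(u * y)) * Real.exp (-((v - u) * y)) := by
      rw [← Real.exp_add]; ring_nf
    have := Real.add_one_le_exp (-((v - u) * y))
    rw [split]
    nlinarith [Real.exp_pos (-(u * y))]
  rw [integral_add int_u int_deriv, integral_mul_const] at pointwise
  unfold toFun deriv1
  linarith

theorem log_toFun_add_one_sub_le {u : ℝ} (hu : 0 < u) :
    Real.log (φ.toFun (u + 1)) - Real.log (φ.toFun u) ≤ φ.deriv1 u / φ.toFun u := by
  have hpos := φ.toFun_pos hu
  refine (Real.log_sub_log_le_div hpos (φ.toFun_pos (by linarith))).trans ?_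
  gcongr
  linarith [φ.toFun_le_add_deriv1_mul hu (v := u + 1) (by linarith)]

theorem deriv1_add_one_div_le {u : ℝ} (hu : 0 < u) :
    φ.deriv1 (u + 1) / φ.toFun (u + 1) ≤ Real.log (φ.toFun (u + 1)) - Real.log (φ.toFun u) := by
  have hpos := φ.toFun_pos (show 0 < u + 1 by linarith)
  refine le_trans ?_ (Real.div_le_log_sub_log (φ.toFun_pos hu) hpos)
  gcongr
  linarith [φ.toFun_le_add_deriv1_mul (show 0 < u + 1 by linarith) hu.le]

end BernsteinFn

/-- The constant `γ_φ = lim_{n→∞} (Σ_{k=1}^n φ'(k)/φ(k) − log φ(n))` exists and satisfies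
`−log φ(1) ≤ γ_φ ≤ φ'(1)/φ(1) − log φ(1)`. -/
theorem stmt15 (φ : BernsteinFn) :
    ∃ γ : ℝ,
      Filter.Tendsto
        (fun n : ℕ =>
          (∑ k ∈ Finset.Icc 1 n, φ.deriv1 (k : ℝ) / φ.toFun (k : ℝ))
            - Real.log (φ.toFun (n : ℝ)))
        Filter.atTop (nhds γ) ∧
      γ ∈ Set.Icc (-Real.log (φ.toFun 1)) (φ.deriv1 1 / φ.toFun 1 - Real.log (φ.toFun 1)) := by
  simpa using exists_tendsto_sum_Icc_sub_mem_Icc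
    (g := fun k : ℕ => φ.deriv1 k / φ.toFun k) (f := fun n : ℕ => Real.log (φ.toFun n))
    (fun k hk => div_nonneg (φ.deriv1_nonneg k) (φ.toFun_pos (Nat.cast_pos.mpr hk)).le)
    (fun k hk => by simpa using φ.log_toFun_add_one_sub_le (Nat.cast_pos.mpr hk))
    (fun k hk => by simpa using φ.deriv1_add_one_div_le (Nat.cast_pos.mpr hk))
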